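/- arXiv:1611.10294 — 6 statements merged into one kernel-verified Lean document; each statement's English description precedes it below -/
import Mathlib

section
/- For s < 0 define the Mehler kernel p_s(x,y) = (π(e^{−s} − e^{s}))^{−1/2} exp( (y² − x²)/2 − s/2 − (e^{s/2}x − e^{−s/2}y)²/(e^{−s} − e^{s}) ), and for n ∈ ℕ and t, z ∈ ℝ define θ_{n,t,z}(x) = e^{tn − sinh(t)(xz + cosh(t)z²/2)} φ_n(x + cosh(t)z). Then for every s < 0, every n ∈ ℕ, all t, z ∈ ℝ and every x ∈ ℝ, ∫_ℝ p_s(x,y) θ_{n,t,z}(y) dy = θ_{n,s+t,z}(x). In particular, taking t = 0, ∫_ℝ p_s(x,y) φ_n(y+z) dy = e^{sn − sinh(s)(xz + cosh(s)z²/2)} φ_n(x + cosh(s)z). -/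
open Real MeasureTheory

/-- Physicists' Hermite polynomials: H₀ = 1, H₁ = 2x, H_{n+2} = 2x H_{n+1} − 2(n+1) H_n. -/
noncomputable def physHermite : ℕ → ℝ → ℝ
  | 0, _ => 1
  | 1, x => 2 * x
  | n + 2, x => 2 * x * physHermite (n + 1) x - 2 * ((n : ℝ) + 1) * physHermite n x

/-- The n-th Hermite function (harmonic oscillator wave function)
φₙ(x) = (2ⁿ n! √π)^{−1/2} Hₙ(x) e^{−x²/2}. -/
noncomputable def hermiteFn (n : ℕ) (x : ℝ) : ℝ :=
  ((2 : ℝ) ^ n * Nat.factorial n * Real.sqrt Real.pi) ^ (-(1 : ℝ) / 2) *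
    physHermite n x * Real.exp (-x ^ 2 / 2)
/-- The Mehler kernel p_s(x,y), the integral kernel of e^{s D} for s < 0, where
D = −(Δ − x² + 1)/2 is the harmonic oscillator operator. -/
noncomputable def mehlerKer (s x y : ℝ) : ℝ :=
  (Real.pi * (Real.exp (-s) - Real.exp s)) ^ (-(1 : ℝ) / 2) *
    Real.exp ((y ^ 2 - x ^ 2) / 2 - s / 2 -
      (Real.exp (s / 2) * x - Real.exp (-s / 2) * y) ^ 2 / (Real.exp (-s) - Real.exp s))

/-- θ_{n,t,z}(x) = e^{tn − sinh(t)(xz + cosh(t)z²/2)} φₙ(x + cosh(t)z). -/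
noncomputable def thetaFn (n : ℕ) (t z x : ℝ) : ℝ :=
  Real.exp (t * n - Real.sinh t * (x * z + Real.cosh t * z ^ 2 / 2)) *
    hermiteFn n (x + Real.cosh t * z)

/-!
Conjugated by the Gaussian `e^{-x²/2}`, the Mehler kernel becomes the Ornstein–Uhlenbeck kernel
`(π v)^{-1/2} e^{-(y - u x)² / v}` with `u = e^s` and `v = 1 - u²`. Gaussian integration by parts
and the three-term recurrence of the Hermite polynomials show that both sides of
`∫ e^{-(y - u x)² / v} H_n(y) dy = √(π v) uⁿ H_n(x)` obey the same recurrence in `n`.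
For `θ_{n,t,z}` the extra factor `e^{-sinh t · y z}` is absorbed by completing the square, which
only moves the centre of the Gaussian, from `u x` to `u (x + cosh (s + t) z)`.
-/

open Polynomial

lemma physHermite_succ (n : ℕ) (x : ℝ) :
    physHermite (n + 1) x = 2 * x * physHermite n x - 2 * n * physHermite (n - 1) x := by
  cases n with
  | zero => simp [physHermite]
  | succ n => simp only [physHermite, Nat.add_sub_cancel]; push_cast; ring

lemma hasDerivAt_physHermite : ∀ (n : ℕ) (x : ℝ),
    HasDerivAt (physHermite n) (2 * n * physHermite (n - 1) x) x
  | 0, x => by simpa [physHermite] using hasDerivAt_const x (1 : ℝ)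
  | 1, x => by simpa [physHermite] using (hasDerivAt_id x).const_mul (2 : ℝ)
  | n + 2, x => by
    have h := (((hasDerivAt_id x).const_mul 2).mul (hasDerivAt_physHermite (n + 1) x)).sub
      ((hasDerivAt_physHermite n x).const_mul (2 * ((n : ℝ) + 1)))
    refine h.congr_deriv ?_
    simp only [show n + 2 - 1 = n + 1 from rfl, Nat.add_sub_cancel, id]
    push_cast
    linear_combination -2 * ((n : ℝ) + 1) * physHermite_succ n x

lemma exists_polynomial_physHermite : ∀ n : ℕ, ∃ p : ℝ[X], ∀ x, p.eval x = physHermite n x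
  | 0 => ⟨1, by simp [physHermite]⟩
  | 1 => ⟨C 2 * X, by simp [physHermite]⟩
  | n + 2 => by
    obtain ⟨p, hp⟩ := exists_polynomial_physHermite (n + 1)
    obtain ⟨q, hq⟩ := exists_polynomial_physHermite n
    exact ⟨C 2 * X * p - C (2 * ((n : ℝ) + 1)) * q, fun x => by simp [hp, hq, physHermite]⟩

lemma integrable_eval_mul_exp_neg_sq_div (p : ℝ[X]) {v : ℝ} (hv : 0 < v) :
    Integrable fun y : ℝ => p.eval y * exp (-y ^ 2 / v) := by
  induction p using Polynomial.induction_on' with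
  | add p q hp hq => exact (hp.add hq).congr (ae_of_all _ fun y => by simp [add_mul])
  | monomial k c =>
    have := (integrable_rpow_mul_exp_neg_mul_sq (inv_pos.2 hv)
      (neg_one_lt_zero.trans_le (Nat.cast_nonneg k))).const_mul c
    refine this.congr (ae_of_all _ fun y => ?_)
    simp [Real.rpow_natCast, div_eq_inv_mul, mul_assoc]

lemma integrable_eval_mul_exp_neg_sub_sq_div (p : ℝ[X]) {v : ℝ} (hv : 0 < v) (m : ℝ) :
    Integrable fun y : ℝ => p.eval y * exp (-(y - m) ^ 2 / v) := by
  refine ((integrable_eval_mul_exp_neg_sq_div (p.comp (X + C m)) hv).comp_sub_right m).congr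
    (ae_of_all _ fun y => ?_)
  simp

lemma integrable_physHermite_mul_exp {v : ℝ} (hv : 0 < v) (m : ℝ) (n : ℕ) :
    Integrable fun y => physHermite n y * exp (-(y - m) ^ 2 / v) := by
  obtain ⟨p, hp⟩ := exists_polynomial_physHermite n
  simpa [hp] using integrable_eval_mul_exp_neg_sub_sq_div p hv m

lemma integrable_sub_mul_physHermite_mul_exp {v : ℝ} (hv : 0 < v) (m : ℝ) (n : ℕ) :
    Integrable fun y => (y - m) * physHermite n y * exp (-(y - m) ^ 2 / v) := by
  obtain ⟨p, hp⟩ := exists_polynomial_physHermite n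
  exact (integrable_eval_mul_exp_neg_sub_sq_div ((X - C m) * p) hv m).congr
    (ae_of_all _ fun y => by simp [hp])

lemma integral_exp_neg_sub_sq_div (v m : ℝ) : ∫ y, exp (-(y - m) ^ 2 / v) = √(π * v) := by
  rw [integral_sub_right_eq_self (fun y => exp (-y ^ 2 / v)) m, mul_comm]
  simpa [neg_div, div_eq_inv_mul] using integral_gaussian v⁻¹

/-- Stein's identity for the Gaussian of variance `v / 2`. -/
lemma integral_sub_mul_physHermite_mul_exp {v : ℝ} (hv : 0 < v) (m : ℝ) (n : ℕ) :
    ∫ y, (y - m) * physHermite n y * exp (-(y - m) ^ 2 / v)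
      = v * n * ∫ y, physHermite (n - 1) y * exp (-(y - m) ^ 2 / v) := by
  have hderiv : ∀ y, HasDerivAt (fun y => physHermite n y * exp (-(y - m) ^ 2 / v))
      (2 * n * (physHermite (n - 1) y * exp (-(y - m) ^ 2 / v))
        - 2 / v * ((y - m) * physHermite n y * exp (-(y - m) ^ 2 / v))) y := by
    intro y
    have hq : HasDerivAt (fun y => -(y - m) ^ 2 / v) (-(2 * (y - m)) / v) y := by
      simpa using (((hasDerivAt_id y).sub_const m).pow 2).neg.div_const v
    refine ((hasDerivAt_physHermite n y).mul hq.exp).congr_deriv ?_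
    ring
  have h0 := integral_eq_zero_of_hasDerivAt_of_integrable hderiv
    (((integrable_physHermite_mul_exp hv m (n - 1)).const_mul _).sub
      ((integrable_sub_mul_physHermite_mul_exp hv m n).const_mul _))
    (integrable_physHermite_mul_exp hv m n)
  rw [integral_sub ((integrable_physHermite_mul_exp hv m (n - 1)).const_mul _)
      ((integrable_sub_mul_physHermite_mul_exp hv m n).const_mul _),
    integral_const_mul, integral_const_mul] at h0
  linear_combination (norm := skip) (-v / 2) * h0
  field_simp
  ring

lemma integral_physHermite_succ_mul_exp {v : ℝ} (hv : 0 < v) (m : ℝ) (n : ℕ) :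
    ∫ y, physHermite (n + 1) y * exp (-(y - m) ^ 2 / v)
      = 2 * m * (∫ y, physHermite n y * exp (-(y - m) ^ 2 / v))
        - 2 * n * (1 - v) * ∫ y, physHermite (n - 1) y * exp (-(y - m) ^ 2 / v) := by
  have hsplit : (fun y => physHermite (n + 1) y * exp (-(y - m) ^ 2 / v))
      = fun y => 2 * ((y - m) * physHermite n y * exp (-(y - m) ^ 2 / v))
        + 2 * m * (physHermite n y * exp (-(y - m) ^ 2 / v))
        - 2 * n * (physHermite (n - 1) y * exp (-(y - m) ^ 2 / v)) := by
    funext y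
    rw [physHermite_succ]
    ring
  have h₁ := (integrable_sub_mul_physHermite_mul_exp hv m n).const_mul 2
  have h₂ := (integrable_physHermite_mul_exp hv m n).const_mul (2 * m)
  have h₃ := (integrable_physHermite_mul_exp hv m (n - 1)).const_mul (2 * n)
  have hlin := integral_sub (h₁.add h₂) h₃
  simp only [Pi.add_apply] at hlin
  rw [hsplit, hlin, integral_add h₁ h₂,
    integral_const_mul, integral_const_mul, integral_const_mul,
    integral_sub_mul_physHermite_mul_exp hv m n]
  ring

theorem integral_physHermite_mul_exp_neg_sub_mul_sq_div {u : ℝ} (hu : u ^ 2 < 1) (x : ℝ) :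
    ∀ n : ℕ, ∫ y, physHermite n y * exp (-(y - u * x) ^ 2 / (1 - u ^ 2))
      = √(π * (1 - u ^ 2)) * u ^ n * physHermite n x
  | 0 => by simpa [physHermite] using integral_exp_neg_sub_sq_div (1 - u ^ 2) (u * x)
  | 1 => by
    rw [integral_physHermite_succ_mul_exp (sub_pos.2 hu),
      integral_physHermite_mul_exp_neg_sub_mul_sq_div hu x 0]
    simp [physHermite]
    ring
  | n + 2 => by
    rw [integral_physHermite_succ_mul_exp (sub_pos.2 hu), Nat.add_sub_cancel,
      integral_physHermite_mul_exp_neg_sub_mul_sq_div hu x (n + 1),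
      integral_physHermite_mul_exp_neg_sub_mul_sq_div hu x n, physHermite_succ (n + 1) x,
      Nat.add_sub_cancel]
    push_cast
    ring

lemma mehlerKer_eq {s : ℝ} (hs : s < 0) (x y : ℝ) :
    mehlerKer s x y = (√(π * (1 - exp s ^ 2)))⁻¹ *
      exp ((y ^ 2 - x ^ 2) / 2 - (y - exp s * x) ^ 2 / (1 - exp s ^ 2)) := by
  have hu : 0 < exp s := exp_pos s
  have hv : 0 < 1 - exp s ^ 2 := by nlinarith [exp_lt_one_iff.2 hs]
  have hdiff : exp (-s) - exp s = (1 - exp s ^ 2) / exp s := by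
    rw [exp_neg]; field_simp
  have hhalf : exp (s / 2) ^ 2 = exp s := by rw [← exp_nat_mul]; ring_nf
  have hprefactor : (π * (exp (-s) - exp s)) ^ (-(1 : ℝ) / 2)
      = (√(π * (1 - exp s ^ 2)))⁻¹ * exp (s / 2) := by
    rw [hdiff, show (-(1 : ℝ) / 2) = -(1 / 2) by norm_num, rpow_neg (by positivity),
      ← sqrt_eq_rpow, mul_div_assoc', sqrt_div (by positivity), exp_half, inv_div, div_eq_inv_mul]
  rw [mehlerKer, hprefactor, mul_assoc, ← exp_add]
  congr 2
  rw [hdiff, show -s / 2 = -(s / 2) by ring, exp_neg, ← hhalf]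
  field_simp
  ring

lemma mehlerKer_mul_thetaFn {s : ℝ} (hs : s < 0) (n : ℕ) (t z x y : ℝ) :
    mehlerKer s x y * thetaFn n t z y
      = (√(π * (1 - exp s ^ 2)))⁻¹ *
        ((2 : ℝ) ^ n * n.factorial * √π) ^ (-(1 : ℝ) / 2) *
        exp ((s + t) * n - sinh (s + t) * (x * z + cosh (s + t) * z ^ 2 / 2)
          - (x + cosh (s + t) * z) ^ 2 / 2 - s * n) *
        (physHermite n (y + cosh t * z) *
          exp (-(y + cosh t * z - exp s * (x + cosh (s + t) * z)) ^ 2 / (1 - exp s ^ 2))) := by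
  have hv : 1 - exp s ^ 2 ≠ 0 := by nlinarith [exp_pos s, exp_lt_one_iff.2 hs]
  have hexponent : (y ^ 2 - x ^ 2) / 2 - (y - exp s * x) ^ 2 / (1 - exp s ^ 2)
        + (t * n - sinh t * (y * z + cosh t * z ^ 2 / 2)) + -(y + cosh t * z) ^ 2 / 2
      = ((s + t) * n - sinh (s + t) * (x * z + cosh (s + t) * z ^ 2 / 2)
          - (x + cosh (s + t) * z) ^ 2 / 2 - s * n)
        + -(y + cosh t * z - exp s * (x + cosh (s + t) * z)) ^ 2 / (1 - exp s ^ 2) := by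
    simp only [sinh_eq, cosh_eq, exp_add, exp_neg]
    field_simp
    ring
  have hexp := congrArg exp hexponent
  simp only [exp_add] at hexp
  rw [mehlerKer_eq hs, thetaFn, hermiteFn]
  linear_combination (√(π * (1 - exp s ^ 2)))⁻¹ *
    ((2 : ℝ) ^ n * n.factorial * √π) ^ (-(1 : ℝ) / 2) * physHermite n (y + cosh t * z) * hexp

theorem integral_mehlerKer_mul_thetaFn {s : ℝ} (hs : s < 0) (n : ℕ) (t z x : ℝ) :
    ∫ y, mehlerKer s x y * thetaFn n t z y = thetaFn n (s + t) z x := by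
  have hu : exp s ^ 2 < 1 := by nlinarith [exp_pos s, exp_lt_one_iff.2 hs]
  have hsqrt : √(π * (1 - exp s ^ 2)) ≠ 0 := by
    have := sub_pos.2 hu
    positivity
  set X := x + cosh (s + t) * z
  set P := (s + t) * n - sinh (s + t) * (x * z + cosh (s + t) * z ^ 2 / 2)
  have hweight : exp (P - X ^ 2 / 2 - s * n) * exp s ^ n = exp P * exp (-X ^ 2 / 2) := by
    rw [← exp_nat_mul, ← exp_add, ← exp_add]
    ring_nf
  simp only [mehlerKer_mul_thetaFn hs]
  rw [integral_const_mul, integral_add_right_eq_self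
      (fun w => physHermite n w * exp (-(w - exp s * X) ^ 2 / (1 - exp s ^ 2))) (cosh t * z),
    integral_physHermite_mul_exp_neg_sub_mul_sq_div hu X n, thetaFn, hermiteFn]
  calc _ = ((2 : ℝ) ^ n * n.factorial * √π) ^ (-(1 : ℝ) / 2) *
          (exp (P - X ^ 2 / 2 - s * n) * exp s ^ n) * physHermite n X *
          ((√(π * (1 - exp s ^ 2)))⁻¹ * √(π * (1 - exp s ^ 2))) := by ring
    _ = _ := by
      rw [hweight, inv_mul_cancel₀ hsqrt]
      ring

theorem stmt2 (s : ℝ) (hs : s < 0) (n : ℕ) (t z x : ℝ) :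
    (∫ y : ℝ, mehlerKer s x y * thetaFn n t z y) = thetaFn n (s + t) z x ∧
      (∫ y : ℝ, mehlerKer s x y * hermiteFn n (y + z)) =
        Real.exp (s * n - Real.sinh s * (x * z + Real.cosh s * z ^ 2 / 2)) *
          hermiteFn n (x + Real.cosh s * z) := by
  refine ⟨integral_mehlerKer_mul_thetaFn hs n t z x, ?_⟩
  have hθ : ∀ y, thetaFn n 0 z y = hermiteFn n (y + z) := fun y => by simp [thetaFn]
  have h := integral_mehlerKer_mul_thetaFn hs n 0 z x
  simp only [hθ, add_zero] at h
  exact h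
end

section
/- Fix r ∈ ℝ, L > 0 and t ∈ ℝ with t > −L, and define θ(z) = [4(z − r cosh(L)) / (√π (e^{2t} − e^{−2L})^{3/2})] · exp( −[2z²(e^{2t} + e^{−2L}) − 4rz e^{−L}(1 + e^{2t}) + r²(e^{2t} + 1)²] / (4(e^{2t} − e^{−2L})) − L + 2t ). Then for every n ∈ ℕ, ∫_ℝ φ_n(z) θ(z) dz = 2 e^{−r² cosh(t)²/2 − n(L+t)} [ φ_n'(r cosh(t)) + r sinh(t) φ_n(r cosh(t)) ]. -/
open Real MeasureTheory

/-!
Write φₙ(z) = cₙ Hₙ(z) e^{-z²/2}. The factor e^{-z²/2} combines with the kernel θ into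
(z - r cosh L) times the Gaussian e^{-a (z - ρ y)²}, where ρ = e^{-(L+t)}, y = r cosh t and
a (1 - ρ²) = 1. For exactly these Gaussians the Hermite polynomials are reproduced up to
scaling (a form of Mehler's formula):  ∫ Hₙ(x) e^{-a (x - ρ y)²} dx = √(π/a) ρⁿ Hₙ(y).
This follows by induction from the three-term recurrence and the integration by parts identity
∫ p' e^{-a (x - c)²} = 2a ∫ (x - c) p e^{-a (x - c)²}, which also handles the linear factor
z - r cosh L. What remains is algebra in e^t and e^{-L}.
-/

section HermitePolynomial

open Polynomial

noncomputable def physHermitePoly : ℕ → ℝ[X]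
  | 0 => 1
  | 1 => C 2 * X
  | n + 2 => C 2 * X * physHermitePoly (n + 1) - C (2 * ((n : ℝ) + 1)) * physHermitePoly n

theorem eval_physHermitePoly : ∀ (n : ℕ) (x : ℝ), (physHermitePoly n).eval x = physHermite n x
  | 0, x => by simp [physHermite, physHermitePoly]
  | 1, x => by simp [physHermite, physHermitePoly]
  | n + 2, x => by
    simp [physHermite, physHermitePoly, eval_physHermitePoly (n + 1), eval_physHermitePoly n]

theorem derivative_physHermitePoly_succ :
    ∀ n : ℕ, derivative (physHermitePoly (n + 1)) = C (2 * ((n : ℝ) + 1)) * physHermitePoly n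
  | 0 => by simp [physHermitePoly]
  | 1 => by
    simp only [physHermitePoly, derivative_mul, derivative_sub, derivative_C, derivative_X,
      zero_mul, mul_one, zero_add, sub_zero, CharP.cast_eq_zero, Nat.cast_one, map_mul, map_add,
      map_one]
    ring
  | n + 2 => by
    rw [physHermitePoly, derivative_sub, derivative_mul, derivative_mul,
      derivative_physHermitePoly_succ (n + 1), derivative_C_mul, derivative_physHermitePoly_succ n,
      physHermitePoly]
    simp only [derivative_C, derivative_X]
    push_cast
    simp only [map_add, map_mul, map_one, map_ofNat, map_natCast]
    ring

end HermitePolynomial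

section GaussianPairing

open Polynomial

noncomputable def gaussianPairing (a c : ℝ) (p : ℝ[X]) : ℝ :=
  ∫ x, p.eval x * exp (-a * (x - c) ^ 2)

theorem integrable_eval_mul_exp_neg_mul_sq {a : ℝ} (ha : 0 < a) (p : ℝ[X]) :
    Integrable fun x => p.eval x * exp (-a * x ^ 2) := by
  induction p using Polynomial.induction_on' with
  | add p q hp hq =>
    simp only [eval_add, add_mul]
    exact hp.add hq
  | monomial n b =>
    have hn : (-1 : ℝ) < n := by linarith [n.cast_nonneg (α := ℝ)]
    have := (integrable_rpow_mul_exp_neg_mul_sq ha hn).const_mul b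
    simpa only [eval_monomial, rpow_natCast, mul_assoc] using this

theorem integrable_eval_mul_exp_neg_mul_sub_sq {a : ℝ} (ha : 0 < a) (c : ℝ) (p : ℝ[X]) :
    Integrable fun x => p.eval x * exp (-a * (x - c) ^ 2) := by
  have := (integrable_eval_mul_exp_neg_mul_sq ha (p.comp (X + C c))).comp_sub_right c
  simp only [eval_comp, eval_add, eval_X, eval_C, sub_add_cancel] at this
  exact this

theorem gaussianPairing_one (a c : ℝ) : gaussianPairing a c 1 = √(π / a) := by
  simpa [gaussianPairing] using
    (integral_sub_right_eq_self (fun x => exp (-a * x ^ 2)) c).trans (integral_gaussian a)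

theorem gaussianPairing_C_mul (a c r : ℝ) (p : ℝ[X]) :
    gaussianPairing a c (C r * p) = r * gaussianPairing a c p := by
  simp only [gaussianPairing, eval_mul, eval_C, mul_assoc, integral_const_mul]

theorem gaussianPairing_add {a : ℝ} (ha : 0 < a) (c : ℝ) (p q : ℝ[X]) :
    gaussianPairing a c (p + q) = gaussianPairing a c p + gaussianPairing a c q := by
  simp only [gaussianPairing, eval_add, add_mul]
  exact integral_add (integrable_eval_mul_exp_neg_mul_sub_sq ha c p)
    (integrable_eval_mul_exp_neg_mul_sub_sq ha c q)

theorem gaussianPairing_sub {a : ℝ} (ha : 0 < a) (c : ℝ) (p q : ℝ[X]) :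
    gaussianPairing a c (p - q) = gaussianPairing a c p - gaussianPairing a c q := by
  simp only [gaussianPairing, eval_sub, sub_mul]
  exact integral_sub (integrable_eval_mul_exp_neg_mul_sub_sq ha c p)
    (integrable_eval_mul_exp_neg_mul_sub_sq ha c q)

theorem gaussianPairing_derivative {a : ℝ} (ha : 0 < a) (c : ℝ) (p : ℝ[X]) :
    gaussianPairing a c (derivative p) = 2 * a * gaussianPairing a c ((X - C c) * p) := by
  have hderiv : ∀ x, HasDerivAt (fun x => p.eval x * exp (-a * (x - c) ^ 2))
      ((derivative p - C (2 * a) * ((X - C c) * p)).eval x * exp (-a * (x - c) ^ 2)) x := by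
    intro x
    have hq : HasDerivAt (fun x => -a * (x - c) ^ 2) (-a * (2 * (x - c))) x :=
      ((((hasDerivAt_id' x).sub_const c).fun_pow 2).const_mul (-a)).congr_deriv (by norm_num)
    refine ((p.hasDerivAt x).fun_mul hq.exp).congr_deriv ?_
    simp only [eval_sub, eval_mul, eval_C, eval_X]
    ring
  have h := integral_eq_zero_of_hasDerivAt_of_integrable hderiv
    (integrable_eval_mul_exp_neg_mul_sub_sq ha c _) (integrable_eval_mul_exp_neg_mul_sub_sq ha c p)
  rw [← gaussianPairing, gaussianPairing_sub ha, gaussianPairing_C_mul] at h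
  linarith

theorem gaussianPairing_X_mul {a : ℝ} (ha : 0 < a) (c : ℝ) (p : ℝ[X]) :
    gaussianPairing a c (X * p) =
      c * gaussianPairing a c p + gaussianPairing a c (derivative p) / (2 * a) := by
  rw [gaussianPairing_derivative ha, show X * p = (X - C c) * p + C c * p by ring,
    gaussianPairing_add ha, gaussianPairing_C_mul]
  field_simp
  ring

end GaussianPairing

section Mehler

open Polynomial

theorem gaussianPairing_physHermitePoly {a ρ y : ℝ} (ha : 0 < a) (hρ : a * (1 - ρ ^ 2) = 1) :
    ∀ n, gaussianPairing a (ρ * y) (physHermitePoly n) = √(π / a) * ρ ^ n * physHermite n y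
  | 0 => by simp [physHermitePoly, physHermite, gaussianPairing_one]
  | 1 => by
    rw [show physHermitePoly 1 = C 2 * (X * 1) by simp [physHermitePoly], gaussianPairing_C_mul,
      gaussianPairing_X_mul ha, gaussianPairing_one, derivative_one]
    simp only [gaussianPairing, physHermite, eval_zero, zero_mul, integral_zero, zero_div,
      add_zero, pow_one]
    ring
  | n + 2 => by
    have hrec : physHermitePoly (n + 2) = C 2 * (X * physHermitePoly (n + 1)) -
        C (2 * ((n : ℝ) + 1)) * physHermitePoly n := by
      rw [physHermitePoly]; ring
    have ha' : 1 / a = 1 - ρ ^ 2 := by field_simp; linarith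
    rw [hrec, gaussianPairing_sub ha, gaussianPairing_C_mul, gaussianPairing_C_mul,
      gaussianPairing_X_mul ha, derivative_physHermitePoly_succ, gaussianPairing_C_mul,
      gaussianPairing_physHermitePoly ha hρ n, gaussianPairing_physHermitePoly ha hρ (n + 1),
      physHermite]
    linear_combination (2 * ((n : ℝ) + 1) * √(π / a) * ρ ^ n * physHermite n y) * ha'

theorem mul_gaussianPairing_derivative_physHermitePoly {a ρ y : ℝ} (ha : 0 < a)
    (hρ : a * (1 - ρ ^ 2) = 1) (n : ℕ) :
    ρ * gaussianPairing a (ρ * y) (derivative (physHermitePoly n)) =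
      √(π / a) * ρ ^ n * (derivative (physHermitePoly n)).eval y := by
  cases n with
  | zero => simp [physHermitePoly, gaussianPairing]
  | succ n =>
    rw [derivative_physHermitePoly_succ, gaussianPairing_C_mul,
      gaussianPairing_physHermitePoly ha hρ, eval_mul, eval_C, eval_physHermitePoly]
    ring

theorem gaussianPairing_X_sub_C_mul_physHermitePoly {a ρ y : ℝ} (ha : 0 < a)
    (hρ : a * (1 - ρ ^ 2) = 1) (hρ₀ : ρ ≠ 0) (m : ℝ) (n : ℕ) :
    gaussianPairing a (ρ * y) ((X - C m) * physHermitePoly n) =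
      √(π / a) * ρ ^ n * ((ρ * y - m) * physHermite n y +
        (derivative (physHermitePoly n)).eval y / (2 * a * ρ)) := by
  have hd := mul_gaussianPairing_derivative_physHermitePoly (y := y) ha hρ n
  rw [sub_mul, gaussianPairing_sub ha, gaussianPairing_X_mul ha, gaussianPairing_C_mul,
    gaussianPairing_physHermitePoly ha hρ]
  field_simp
  linear_combination hd

end Mehler

theorem hasDerivAt_hermiteFn (n : ℕ) (x : ℝ) :
    HasDerivAt (hermiteFn n)
      (((2 : ℝ) ^ n * n.factorial * √π) ^ (-(1 : ℝ) / 2) *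
        ((physHermitePoly n).derivative.eval x - x * physHermite n x) * exp (-x ^ 2 / 2)) x := by
  have hfn : hermiteFn n = fun x => ((2 : ℝ) ^ n * n.factorial * √π) ^ (-(1 : ℝ) / 2) *
      (physHermitePoly n).eval x * exp (-x ^ 2 / 2) := by
    ext x; rw [hermiteFn, eval_physHermitePoly]
  have hq : HasDerivAt (fun x : ℝ => -x ^ 2 / 2) (-x) x :=
    (((hasDerivAt_id' x).fun_pow 2).neg.div_const 2).congr_deriv (by ring)
  rw [hfn]
  refine ((((physHermitePoly n).hasDerivAt x).const_mul _).fun_mul hq.exp).congr_deriv ?_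
  rw [eval_physHermitePoly]
  ring

noncomputable def thetaKernel (r L t z : ℝ) : ℝ :=
  4 * (z - r * cosh L) / (√π * (exp (2 * t) - exp (-(2 * L))) ^ ((3 : ℝ) / 2)) *
    exp (-(2 * z ^ 2 * (exp (2 * t) + exp (-(2 * L))) - 4 * r * z * exp (-L) * (1 + exp (2 * t)) +
        r ^ 2 * (exp (2 * t) + 1) ^ 2) / (4 * (exp (2 * t) - exp (-(2 * L)))) - L + 2 * t)

theorem exp_two_mul_sub_exp_neg_two_mul_pos {L t : ℝ} (ht : -L < t) :
    0 < exp (2 * t) - exp (-(2 * L)) :=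
  sub_pos.2 (exp_lt_exp.2 (by linarith))

theorem exp_neg_sq_half_mul_thetaKernel {r L t : ℝ} (ht : -L < t) (z : ℝ) :
    exp (-z ^ 2 / 2) * thetaKernel r L t z =
      4 * exp (2 * t - L - (r * cosh t) ^ 2) /
          (√π * (exp (2 * t) - exp (-(2 * L))) ^ ((3 : ℝ) / 2)) * (z - r * cosh L) *
        exp (-(exp (2 * t) / (exp (2 * t) - exp (-(2 * L)))) *
          (z - exp (-(L + t)) * (r * cosh t)) ^ 2) := by
  have hS := exp_two_mul_sub_exp_neg_two_mul_pos ht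
  have hexp : -z ^ 2 / 2 + (-(2 * z ^ 2 * (exp (2 * t) + exp (-(2 * L))) -
      4 * r * z * exp (-L) * (1 + exp (2 * t)) + r ^ 2 * (exp (2 * t) + 1) ^ 2) /
        (4 * (exp (2 * t) - exp (-(2 * L)))) - L + 2 * t) =
      2 * t - L - (r * cosh t) ^ 2 + -(exp (2 * t) / (exp (2 * t) - exp (-(2 * L)))) *
          (z - exp (-(L + t)) * (r * cosh t)) ^ 2 := by
    have h2t : exp (2 * t) = exp t ^ 2 := by rw [← exp_nat_mul]; norm_num
    have h2L : exp (-(2 * L)) = exp (-L) ^ 2 := by rw [← exp_nat_mul]; ring_nf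
    have hLt : exp (-(L + t)) = exp (-L) / exp t := by
      rw [neg_add, exp_add, exp_neg t, div_eq_mul_inv]
    rw [h2t, h2L] at hS ⊢
    rw [hLt, cosh_eq, exp_neg t]
    field_simp
    ring
  rw [thetaKernel, mul_left_comm, mul_div_assoc, ← exp_add, hexp, exp_add]
  ring

open Polynomial in
theorem integral_hermiteFn_mul_thetaKernel {r L t : ℝ} (ht : -L < t) (n : ℕ) :
    ∫ z, hermiteFn n z * thetaKernel r L t z =
      2 * ((2 : ℝ) ^ n * n.factorial * √π) ^ (-(1 : ℝ) / 2) * exp (-(r * cosh t) ^ 2) *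
        exp (-(L + t)) ^ n * ((derivative (physHermitePoly n)).eval (r * cosh t) -
          r * exp (-t) * physHermite n (r * cosh t)) := by
  have hS := exp_two_mul_sub_exp_neg_two_mul_pos ht
  have h2t : exp (2 * t) = exp t ^ 2 := by rw [← exp_nat_mul]; norm_num
  have h2L : exp (-(2 * L)) = exp (-L) ^ 2 := by rw [← exp_nat_mul]; ring_nf
  have hSE : exp (2 * t) - exp (-(2 * L)) = exp t ^ 2 - exp (-L) ^ 2 := by rw [h2t, h2L]
  have hSE_pos : 0 < exp t ^ 2 - exp (-L) ^ 2 := hSE ▸ hS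
  have hρ : exp (-(L + t)) = exp (-L) / exp t := by
    rw [neg_add, exp_add, exp_neg t, div_eq_mul_inv]
  have hexpL : exp L = (exp (-L))⁻¹ := by rw [exp_neg, inv_inv]
  set S := exp (2 * t) - exp (-(2 * L))
  set a := exp (2 * t) / S with ha_def
  set ρ := exp (-(L + t))
  set y := r * cosh t with hy_def
  set A := 4 * exp (2 * t - L - y ^ 2) / (√π * S ^ ((3 : ℝ) / 2)) with hA_def
  have ha : 0 < a := div_pos (exp_pos _) hS
  have haρ : a * (1 - ρ ^ 2) = 1 := by
    rw [ha_def, hρ, hSE, h2t]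
    field_simp
  have hintegrand : ∀ z, hermiteFn n z * thetaKernel r L t z =
      ((2 : ℝ) ^ n * n.factorial * √π) ^ (-(1 : ℝ) / 2) * A *
        (((X - C (r * cosh L)) * physHermitePoly n).eval z * exp (-a * (z - ρ * y) ^ 2)) := by
    intro z
    rw [hermiteFn, mul_assoc _ (exp _), exp_neg_sq_half_mul_thetaKernel ht, ← eval_physHermitePoly]
    simp only [eval_mul, eval_sub, eval_X, eval_C]
    ring
  have hprefactor : A * √(π / a) = 4 * exp t * exp (-L) * exp (-y ^ 2) / S := by
    have hpow : S ^ ((3 : ℝ) / 2) = S * √S := by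
      rw [show (3 : ℝ) / 2 = 1 + 1 / 2 by norm_num, rpow_add hS, rpow_one, sqrt_eq_rpow]
    have hexp : exp (2 * t - L - y ^ 2) = exp t ^ 2 * exp (-L) * exp (-y ^ 2) := by
      rw [← h2t, ← exp_add, ← exp_add]; ring_nf
    rw [hA_def, hpow, hexp, ha_def, div_div_eq_mul_div, sqrt_div' _ (exp_pos _).le,
      sqrt_mul pi_pos.le, h2t, sqrt_sq (exp_pos _).le]
    have := sqrt_pos.2 hS
    have := sqrt_pos.2 pi_pos
    field_simp
  have hcoeff_eval : 4 * exp t * exp (-L) / S * (ρ * y - r * cosh L) = -2 * r * exp (-t) := by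
    rw [hρ, hy_def, hSE, cosh_eq t, cosh_eq L, hexpL, exp_neg t]
    field_simp
    ring
  have hcoeff_derivative : 4 * exp t * exp (-L) / S / (2 * a * ρ) = 2 := by
    rw [hρ, ha_def, hSE, h2t]
    field_simp
    ring
  rw [integral_congr_ae (.of_forall hintegrand), integral_const_mul, ← gaussianPairing,
    gaussianPairing_X_sub_C_mul_physHermitePoly ha haρ (exp_pos _).ne', ← mul_assoc,
    ← mul_assoc, mul_assoc _ A, hprefactor]
  linear_combination
    (((2 : ℝ) ^ n * n.factorial * √π) ^ (-(1 : ℝ) / 2) * exp (-y ^ 2) * ρ ^ n) *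
      (physHermite n y * hcoeff_eval +
        (derivative (physHermitePoly n)).eval y * hcoeff_derivative)

theorem stmt5_general (r L t : ℝ) (ht : -L < t) (n : ℕ) :
    (∫ z : ℝ, hermiteFn n z *
        (4 * (z - r * Real.cosh L) /
            (Real.sqrt Real.pi * (Real.exp (2 * t) - Real.exp (-(2 * L))) ^ ((3 : ℝ) / 2)) *
          Real.exp (-(2 * z ^ 2 * (Real.exp (2 * t) + Real.exp (-(2 * L))) -
                4 * r * z * Real.exp (-L) * (1 + Real.exp (2 * t)) +
                r ^ 2 * (Real.exp (2 * t) + 1) ^ 2) /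
              (4 * (Real.exp (2 * t) - Real.exp (-(2 * L)))) - L + 2 * t))) =
      2 * Real.exp (-(r ^ 2) * Real.cosh t ^ 2 / 2 - n * (L + t)) *
        (deriv (hermiteFn n) (r * Real.cosh t) +
          r * Real.sinh t * hermiteFn n (r * Real.cosh t)) := by
  change ∫ z, hermiteFn n z * thetaKernel r L t z = _
  have hexp_sq : exp (-(r * cosh t) ^ 2) = exp (-(r * cosh t) ^ 2 / 2) ^ 2 := by
    rw [← exp_nat_mul]; ring_nf
  have hexp_split : exp (-(r ^ 2) * cosh t ^ 2 / 2 - n * (L + t)) =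
      exp (-(r * cosh t) ^ 2 / 2) * exp (-(L + t)) ^ n := by
    rw [← exp_nat_mul, ← exp_add]; ring_nf
  have hsinh_sub_cosh : sinh t - cosh t = -exp (-t) := by
    rw [sinh_eq, cosh_eq]; ring
  rw [integral_hermiteFn_mul_thetaKernel ht, (hasDerivAt_hermiteFn n _).deriv, hermiteFn,
    hexp_sq, hexp_split]
  linear_combination (-2 * ((2 : ℝ) ^ n * n.factorial * √π) ^ (-(1 : ℝ) / 2) *
    exp (-(r * cosh t) ^ 2 / 2) ^ 2 * exp (-(L + t)) ^ n * r * physHermite n (r * cosh t)) *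
      hsinh_sub_cosh

theorem stmt5 (r L t : ℝ) (hL : 0 < L) (ht : -L < t) (n : ℕ) :
    (∫ z : ℝ, hermiteFn n z *
        (4 * (z - r * Real.cosh L) /
            (Real.sqrt Real.pi * (Real.exp (2 * t) - Real.exp (-(2 * L))) ^ ((3 : ℝ) / 2)) *
          Real.exp (-(2 * z ^ 2 * (Real.exp (2 * t) + Real.exp (-(2 * L))) -
                4 * r * z * Real.exp (-L) * (1 + Real.exp (2 * t)) +
                r ^ 2 * (Real.exp (2 * t) + 1) ^ 2) /
              (4 * (Real.exp (2 * t) - Real.exp (-(2 * L)))) - L + 2 * t))) =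
      2 * Real.exp (-(r ^ 2) * Real.cosh t ^ 2 / 2 - n * (L + t)) *
        (deriv (hermiteFn n) (r * Real.cosh t) +
          r * Real.sinh t * hermiteFn n (r * Real.cosh t)) :=
  stmt5_general r L t ht n
end

section
/- For every real x ≥ 1, x√(x² − 1) − log( x + √(x² − 1) ) ≥ (4√2/3)(x − 1)^{3/2}. -/
/-! The logarithm is `arcosh x`, so the left side has derivative `2√(x² - 1)` while the right
side has derivative `2√2 √(x - 1)`. As `x² - 1 = (x - 1)(x + 1) ≥ 2(x - 1)` for `x ≥ 1`, the
difference of the two sides is nondecreasing on `[1, ∞)`, and it vanishes at `x = 1`. -/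

open Real Set

lemma hasDerivAt_mul_sqrt_sq_sub_one_sub_arcosh {x : ℝ} (hx : 1 < x) :
    HasDerivAt (fun y => y * √(y ^ 2 - 1) - arcosh y) (2 * √(x ^ 2 - 1)) x := by
  have hpos : 0 < x ^ 2 - 1 := by nlinarith
  have hsqrt : HasDerivAt (fun y => √(y ^ 2 - 1)) (2 * x / (2 * √(x ^ 2 - 1))) x := by
    simpa using ((hasDerivAt_pow 2 x).sub_const 1).sqrt hpos.ne'
  refine ((hasDerivAt_id' x).mul hsqrt |>.sub (hasDerivAt_arcosh (mem_Ioi.mpr hx))).congr_deriv ?_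
  have hs : 0 < √(x ^ 2 - 1) := sqrt_pos.mpr hpos
  field_simp
  rw [sq_sqrt hpos.le]
  ring

lemma hasDerivAt_sub_rpow_three_halves (a x : ℝ) :
    HasDerivAt (fun y => (y - a) ^ ((3 : ℝ) / 2)) (3 / 2 * √(x - a)) x := by
  refine ((hasDerivAt_id' x).sub_const a |>.rpow_const (p := 3 / 2) (Or.inr (by norm_num)))
    |>.congr_deriv ?_
  rw [sqrt_eq_rpow]
  norm_num

lemma sqrt_two_mul_sqrt_sub_one_le {x : ℝ} (hx : 1 ≤ x) : √2 * √(x - 1) ≤ √(x ^ 2 - 1) := by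
  rw [← sqrt_mul zero_le_two]
  exact sqrt_le_sqrt (by nlinarith)

lemma monotoneOn_mul_sqrt_sq_sub_one_sub_arcosh_sub :
    MonotoneOn (fun y => y * √(y ^ 2 - 1) - arcosh y - 4 * √2 / 3 * (y - 1) ^ ((3 : ℝ) / 2))
      (Ici 1) := by
  refine monotoneOn_of_hasDerivWithinAt_nonneg (convex_Ici 1) ?_ (fun x hx => ?_) (fun x hx => ?_)
    (f' := fun x => 2 * √(x ^ 2 - 1) - 4 * √2 / 3 * (3 / 2 * √(x - 1)))
  · refine ContinuousOn.sub (ContinuousOn.sub (by fun_prop) continuousOn_arcosh) ?_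
    exact (continuous_const.mul ((continuous_sub_right 1).rpow_const
      fun _ => Or.inr (by norm_num))).continuousOn
  · rw [interior_Ici] at hx
    exact ((hasDerivAt_mul_sqrt_sq_sub_one_sub_arcosh hx).sub
      ((hasDerivAt_sub_rpow_three_halves 1 x).const_mul _)).hasDerivWithinAt
  · rw [interior_Ici] at hx
    have := sqrt_two_mul_sqrt_sub_one_le (le_of_lt hx)
    linarith

theorem stmt12 (x : ℝ) (hx : 1 ≤ x) :
    4 * Real.sqrt 2 / 3 * (x - 1) ^ ((3 : ℝ) / 2) ≤
      x * Real.sqrt (x ^ 2 - 1) - Real.log (x + Real.sqrt (x ^ 2 - 1)) := by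
  have h := monotoneOn_mul_sqrt_sq_sub_one_sub_arcosh_sub self_mem_Ici hx hx
  simp only [one_pow, sub_self, sqrt_zero, mul_zero, arcosh_zero,
    zero_rpow (by norm_num : (3 : ℝ) / 2 ≠ 0)] at h
  rw [arcosh] at h
  linarith
end

section
/- Let α > 1. There are constants c₁, n₀ > 0 such that for all a ∈ (1, α), all b < 2√(2(a−1)), and all N ∈ ℕ satisfying min{ N(a−1)^{3/2}, N(2√(2(a−1)) − b)³ } ≥ n₀, one has ∫_0^∞ exp( −N( (8√2/3)(a−1+y)^{3/2} − 2by ) ) dy ≤ [c₁ / ( N (2√(2(a−1)) − b) )] · exp( −(8√2/3) N (a−1)^{3/2} ). -/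
/-!
The exponent is convex in `y`, so it lies above its tangent line at `y = 0`, whose slope
`4√2·√(a-1) - 2b = 2(2√(2(a-1)) - b)` is positive. Bounding the integrand by the exponential of
that tangent line and integrating gives the claim with `c₁ = 1/2`.
-/

open Real MeasureTheory Set

lemma rpow_add_ge_tangent {p s y : ℝ} (hp : 1 ≤ p) (hs : 0 < s) (hy : -s ≤ y) :
    s ^ p + p * s ^ (p - 1) * y ≤ (s + y) ^ p := by
  have hys : -1 ≤ y / s := by rwa [le_div_iff₀ hs, neg_one_mul]
  have hbern := one_add_mul_self_le_rpow_one_add hys hp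
  have hsp : 0 < s ^ p := rpow_pos_of_pos hs p
  calc s ^ p + p * s ^ (p - 1) * y = s ^ p * (1 + p * (y / s)) := by
        rw [rpow_sub_one hs.ne']; field_simp
    _ ≤ s ^ p * (1 + y / s) ^ p := mul_le_mul_of_nonneg_left hbern hsp.le
    _ = (s + y) ^ p := by
        rw [← mul_rpow hs.le (by linarith), mul_add, mul_one, mul_div_cancel₀ _ hs.ne']

lemma integral_exp_neg_le_of_linear_le {f : ℝ → ℝ} {c κ : ℝ} (hκ : 0 < κ)
    (hf : ∀ y > 0, c + κ * y ≤ f y) :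
    ∫ y in Ioi 0, exp (-f y) ≤ exp (-c) / κ := by
  have hint : IntegrableOn (fun y => exp (-c) * exp (-κ * y)) (Ioi 0) :=
    (integrableOn_exp_mul_Ioi (neg_lt_zero.mpr hκ) 0).const_mul _
  calc ∫ y in Ioi 0, exp (-f y) ≤ ∫ y in Ioi 0, exp (-c) * exp (-κ * y) := by
        refine integral_mono_of_nonneg (.of_forall fun _ => (exp_pos _).le) hint ?_
        filter_upwards [ae_restrict_mem measurableSet_Ioi] with y hy
        rw [← exp_add, exp_le_exp]
        linarith [hf y hy]
    _ = exp (-c) / κ := by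
        rw [integral_const_mul, integral_exp_mul_Ioi (neg_lt_zero.mpr hκ), mul_zero, exp_zero,
          neg_div_neg_eq, mul_one_div]

lemma laplace_exponent_ge_tangent {s b y : ℝ} (hs : 0 < s) (hy : 0 ≤ y) :
    8 * √2 / 3 * s ^ ((3 : ℝ) / 2) + 2 * (2 * √(2 * s) - b) * y ≤
      8 * √2 / 3 * (s + y) ^ ((3 : ℝ) / 2) - 2 * b * y := by
  have htan := rpow_add_ge_tangent (p := (3 : ℝ) / 2) (by norm_num) hs (by linarith)
  have hsqrt : s ^ ((3 : ℝ) / 2 - 1) = √s := by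
    rw [sqrt_eq_rpow]; norm_num
  rw [hsqrt] at htan
  have h2s : √(2 * s) = √2 * √s := sqrt_mul (by norm_num) s
  have hcoef : 0 ≤ 8 * √2 / 3 := by positivity
  nlinarith [mul_le_mul_of_nonneg_left htan hcoef]

theorem stmt13_general (α : ℝ) :
    ∃ c₁ n₀ : ℝ, 0 < c₁ ∧ 0 < n₀ ∧
      ∀ (a b : ℝ) (N : ℕ), 1 < a → a < α → b < 2 * Real.sqrt (2 * (a - 1)) →
        n₀ ≤ min ((N : ℝ) * (a - 1) ^ ((3 : ℝ) / 2))
            ((N : ℝ) * (2 * Real.sqrt (2 * (a - 1)) - b) ^ 3) →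
        (∫ y in Set.Ioi (0 : ℝ),
            Real.exp (-(N : ℝ) *
              (8 * Real.sqrt 2 / 3 * (a - 1 + y) ^ ((3 : ℝ) / 2) - 2 * b * y))) ≤
          c₁ / ((N : ℝ) * (2 * Real.sqrt (2 * (a - 1)) - b)) *
            Real.exp (-(8 * Real.sqrt 2 / 3) * N * (a - 1) ^ ((3 : ℝ) / 2)) := by
  refine ⟨1 / 2, 1, by norm_num, by norm_num, fun a b N ha _ hb hn => ?_⟩
  have hs : 0 < a - 1 := by linarith
  have hN : (0 : ℝ) < N := by
    rcases Nat.eq_zero_or_pos N with rfl | hN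
    · norm_num at hn
    · exact_mod_cast hN
  have hB : 0 < 2 * √(2 * (a - 1)) - b := by linarith
  have hbound := integral_exp_neg_le_of_linear_le
    (f := fun y => N * (8 * √2 / 3 * (a - 1 + y) ^ ((3 : ℝ) / 2) - 2 * b * y))
    (c := N * (8 * √2 / 3 * (a - 1) ^ ((3 : ℝ) / 2)))
    (mul_pos hN (mul_pos two_pos hB)) fun y hy => by
      nlinarith [mul_le_mul_of_nonneg_left (laplace_exponent_ge_tangent (b := b) hs hy.le) hN.le]
  simp only [← neg_mul] at hbound
  calc _ ≤ _ := hbound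
    _ = _ := by
        rw [mul_assoc]
        field_simp

theorem stmt13 (α : ℝ) (hα : 1 < α) :
    ∃ c₁ n₀ : ℝ, 0 < c₁ ∧ 0 < n₀ ∧
      ∀ (a b : ℝ) (N : ℕ), 1 < a → a < α → b < 2 * Real.sqrt (2 * (a - 1)) →
        n₀ ≤ min ((N : ℝ) * (a - 1) ^ ((3 : ℝ) / 2))
            ((N : ℝ) * (2 * Real.sqrt (2 * (a - 1)) - b) ^ 3) →
        (∫ y in Set.Ioi (0 : ℝ),
            Real.exp (-(N : ℝ) *
              (8 * Real.sqrt 2 / 3 * (a - 1 + y) ^ ((3 : ℝ) / 2) - 2 * b * y))) ≤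
          c₁ / ((N : ℝ) * (2 * Real.sqrt (2 * (a - 1)) - b)) *
            Real.exp (-(8 * Real.sqrt 2 / 3) * N * (a - 1) ^ ((3 : ℝ) / 2)) :=
  stmt13_general α
end

section
/- There are constants c, n₀ > 0 such that for all t ∈ (0,1) and all N ∈ ℕ with N t³ ≥ n₀, ∫_t^∞ sinh(s)^{3/2} cosh(s)^{1/2} e^{N(2s − sinh(2s))} ds ≤ (c / (N t)) · e^{2t} · e^{N(2t − sinh(2t))}. -/
/-! With `φ s = 2 s - sinh (2 s)` one has `φ' s = -4 sinh² s`, so `(-N φ') e^{N φ}` is an exact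
derivative and integrates over `(t, ∞)` to `e^{N φ(t)}`. For `s > t` the integrand is at most
`(2 / t) sinh² s · e^{N φ(s)}`, i.e. `1 / (2 N t)` times that derivative, which gives the bound
with `c = 1 / 2`. -/

open Real MeasureTheory Filter Set Topology

theorem setIntegral_Ioi_mul_exp_le {f f' g : ℝ → ℝ} {t K : ℝ}
    (hf : ∀ s ∈ Ici t, HasDerivAt f (f' s) s) (hf' : ∀ s ∈ Ioi t, f' s ≤ 0)
    (hf_lim : Tendsto f atTop atBot) (hg : ContinuousOn g (Ioi t))
    (hgK : ∀ s ∈ Ioi t, ‖g s‖ ≤ K * -f' s) :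
    ∫ s in Ioi t, g s * exp (f s) ≤ K * exp (f t) := by
  have hderiv : ∀ s ∈ Ici t, HasDerivAt (fun s => -exp (f s)) (-f' s * exp (f s)) s :=
    fun s hs => ((hf s hs).exp.neg).congr_deriv (by ring)
  have hnonneg : ∀ s ∈ Ioi t, 0 ≤ -f' s * exp (f s) := fun s hs =>
    mul_nonneg (neg_nonneg.2 (hf' s hs)) (exp_pos _).le
  have hlim : Tendsto (fun s => -exp (f s)) atTop (𝓝 0) := by
    simpa using (tendsto_exp_atBot.comp hf_lim).neg
  have hint := integrableOn_Ioi_deriv_of_nonneg' hderiv hnonneg hlim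
  have hbound : ∀ s ∈ Ioi t, ‖g s * exp (f s)‖ ≤ K * (-f' s * exp (f s)) := fun s hs => by
    rw [norm_mul, norm_of_nonneg (exp_pos _).le, ← mul_assoc]
    exact mul_le_mul_of_nonneg_right (hgK s hs) (exp_pos _).le
  have hcont : ContinuousOn (fun s => g s * exp (f s)) (Ioi t) :=
    hg.mul (continuous_exp.comp_continuousOn fun s hs =>
      (hf s (Ioi_subset_Ici_self hs)).continuousAt.continuousWithinAt)
  have hint_g : IntegrableOn (fun s => g s * exp (f s)) (Ioi t) :=
    (hint.const_mul K).mono' (hcont.aestronglyMeasurable measurableSet_Ioi)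
      ((ae_restrict_iff' measurableSet_Ioi).2 (Eventually.of_forall hbound))
  calc ∫ s in Ioi t, g s * exp (f s)
      ≤ ∫ s in Ioi t, K * (-f' s * exp (f s)) :=
        setIntegral_mono_on hint_g (hint.const_mul K) measurableSet_Ioi fun s hs =>
          (le_norm_self _).trans (hbound s hs)
    _ = K * exp (f t) := by
        rw [integral_const_mul, integral_Ioi_of_hasDerivAt_of_nonneg' hderiv hnonneg hlim]
        ring

theorem hasDerivAt_two_mul_sub_sinh_two_mul (s : ℝ) :
    HasDerivAt (fun s => 2 * s - sinh (2 * s)) (-4 * sinh s ^ 2) s := by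
  have h2 : HasDerivAt (fun s : ℝ => 2 * s) 2 s := by simpa using (hasDerivAt_id s).const_mul 2
  refine (h2.sub h2.sinh).congr_deriv ?_
  rw [cosh_two_mul, cosh_sq']
  ring

theorem tendsto_self_sub_sinh_atBot : Tendsto (fun x => x - sinh x) atTop atBot := by
  refine tendsto_atBot_mono' _ ?_ (tendsto_atBot_add_const_left _ 4 tendsto_neg_atTop_atBot)
  filter_upwards [eventually_ge_atTop 0] with x hx
  -- `sinh x ≥ (x + x² / 2) / 2` from the quadratic lower bound on `exp x` and `exp (-x) ≤ 1`
  have hexp := quadratic_le_exp_of_nonneg hx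
  have hexp_neg : exp (-x) ≤ 1 := exp_le_one_iff.2 (neg_nonpos.2 hx)
  rw [sinh_eq]
  nlinarith [sq_nonneg (x - 3)]

theorem tendsto_two_mul_sub_sinh_two_mul_atBot :
    Tendsto (fun s => 2 * s - sinh (2 * s)) atTop atBot :=
  tendsto_self_sub_sinh_atBot.comp (tendsto_id.const_mul_atTop two_pos)

theorem cosh_le_two_div_mul_sinh {t s : ℝ} (ht : 0 < t) (ht1 : t ≤ 1) (hts : t ≤ s) :
    cosh s ≤ 2 / t * sinh s := by
  have hsinh : t ≤ sinh s := (self_le_sinh_iff.2 ht.le).trans (sinh_le_sinh.2 hts)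
  have hexp : exp (-s) ≤ 1 := exp_le_one_iff.2 (by linarith)
  have h1 : 1 ≤ sinh s / t := (one_le_div ht).2 hsinh
  have h2 : sinh s ≤ sinh s / t := le_div_self (by linarith) ht ht1
  calc cosh s = sinh s + exp (-s) := by rw [← cosh_sub_sinh]; ring
    _ ≤ sinh s / t + sinh s / t := by linarith
    _ = 2 / t * sinh s := by ring

theorem sinh_rpow_mul_cosh_rpow_le {t s : ℝ} (ht : 0 < t) (ht1 : t ≤ 1) (hts : t ≤ s) :
    sinh s ^ ((3 : ℝ) / 2) * cosh s ^ ((1 : ℝ) / 2) ≤ 2 / t * sinh s ^ 2 := by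
  have hsinh : 0 < sinh s := sinh_pos_iff.2 (ht.trans_le hts)
  have hct : 0 ≤ 2 / t := by positivity
  calc sinh s ^ ((3 : ℝ) / 2) * cosh s ^ ((1 : ℝ) / 2)
      ≤ sinh s ^ ((3 : ℝ) / 2) * (2 / t * sinh s) ^ ((1 : ℝ) / 2) := by
        gcongr
        exact cosh_le_two_div_mul_sinh ht ht1 hts
    _ = (2 / t) ^ ((1 : ℝ) / 2) * sinh s ^ 2 := by
        rw [mul_rpow hct hsinh.le, mul_left_comm, ← rpow_add hsinh]
        norm_num
    _ ≤ 2 / t * sinh s ^ 2 := by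
        gcongr
        exact rpow_le_self_of_one_le ((one_le_div ht).2 (by linarith)) (by norm_num)

theorem stmt14 :
    ∃ c n₀ : ℝ, 0 < c ∧ 0 < n₀ ∧
      ∀ (t : ℝ) (N : ℕ), 0 < t → t < 1 → n₀ ≤ (N : ℝ) * t ^ 3 →
        (∫ s in Set.Ioi t,
            Real.sinh s ^ ((3 : ℝ) / 2) * Real.cosh s ^ ((1 : ℝ) / 2) *
              Real.exp ((N : ℝ) * (2 * s - Real.sinh (2 * s)))) ≤
          c / ((N : ℝ) * t) * Real.exp (2 * t) *
            Real.exp ((N : ℝ) * (2 * t - Real.sinh (2 * t))) := by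
  refine ⟨1 / 2, 1, by norm_num, one_pos, fun t N ht ht1 hn => ?_⟩
  have hN : (0 : ℝ) < N := pos_of_mul_pos_left (one_pos.trans_le hn) (by positivity)
  calc _ ≤ 1 / (2 * N * t) * exp (N * (2 * t - sinh (2 * t))) := by
        refine setIntegral_Ioi_mul_exp_le (f' := fun s => N * (-4 * sinh s ^ 2))
          (fun s _ => (hasDerivAt_two_mul_sub_sinh_two_mul s).const_mul _)
          (fun s _ => by nlinarith [sq_nonneg (sinh s)])
          (tendsto_two_mul_sub_sinh_two_mul_atBot.const_mul_atBot hN) ((continuous_sinh.rpow_const fun _ => Or.inr (by norm_num)).mul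
            (continuous_cosh.rpow_const fun _ => Or.inr (by norm_num))).continuousOn
          fun s hs => ?_
        have hsinh : 0 < sinh s := sinh_pos_iff.2 (ht.trans hs)
        rw [norm_of_nonneg (by positivity)]
        convert sinh_rpow_mul_cosh_rpow_le ht ht1.le (le_of_lt hs) using 1
        field_simp
        ring
    _ ≤ 1 / 2 / (N * t) * exp (2 * t) * exp (N * (2 * t - sinh (2 * t))) := by
        refine mul_le_mul_of_nonneg_right ?_ (exp_pos _).le
        rw [show 1 / (2 * N * t) = 1 / 2 / (N * t) by ring]
        exact le_mul_of_one_le_right (by positivity) (one_le_exp (by positivity))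
end

section
/- For every s > 0 and every c > 0, ∫_c^∞ ( ∑_{n=0}^∞ e^{−2sn} φ_n(y)² ) dy ≤ e^{s} · e^{−c² tanh(s)} / ( 2 √(2π sinh(2s)) · tanh(s) · c ). (Indeed ∑_{n=0}^∞ e^{−2sn} φ_n(y)² = e^{s} (2π sinh(2s))^{−1/2} e^{−2 sinh(s)² y² / sinh(2s)}, and the Gaussian tail bound ∫_u^∞ e^{−x²} dx ≤ e^{−u²}/(2u) applies.) -/
open Real MeasureTheory Set Filter Topology
open scoped Nat

section HermiteIntegral

open Complex

lemma pow_mul_exp_neg_sq_le {a : ℝ} (ha : 0 ≤ a) (u : ℝ) (m : ℕ) :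
    (a + u ^ 2) ^ m * rexp (-u ^ 2) ≤ m ! * 2 ^ m * rexp (a / 2) * rexp (-(1 / 2) * u ^ 2) := by
  have h := pow_div_factorial_le_exp (x := (a + u ^ 2) / 2) (by positivity) m
  rw [div_pow, div_div, div_le_iff₀ (by positivity)] at h
  have he : rexp ((a + u ^ 2) / 2) * rexp (-u ^ 2) = rexp (a / 2) * rexp (-(1 / 2) * u ^ 2) := by
    rw [← Real.exp_add, ← Real.exp_add]; ring_nf
  calc (a + u ^ 2) ^ m * rexp (-u ^ 2)
      ≤ rexp ((a + u ^ 2) / 2) * (2 ^ m * m !) * rexp (-u ^ 2) := by gcongr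
    _ = m ! * 2 ^ m * rexp (a / 2) * rexp (-(1 / 2) * u ^ 2) := by
      linear_combination (2 ^ m * (m ! : ℝ)) * he

lemma norm_cexp_neg_sq (u : ℝ) : ‖cexp (-(u : ℂ) ^ 2)‖ = rexp (-u ^ 2) := by
  rw [← ofReal_pow, ← ofReal_neg, ← ofReal_exp, norm_real, norm_of_nonneg (exp_pos _).le]

noncomputable def hermiteIntegrand (x : ℝ) (n : ℕ) (u : ℝ) : ℂ :=
  ((x : ℂ) + u * I) ^ n * cexp (-(u : ℂ) ^ 2)

noncomputable def hermiteIntegral (n : ℕ) (x : ℝ) : ℂ :=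
  ∫ u, hermiteIntegrand x n u

lemma norm_hermiteIntegrand (x : ℝ) (n : ℕ) (u : ℝ) :
    ‖hermiteIntegrand x n u‖ = ‖(x : ℂ) + u * I‖ ^ n * rexp (-u ^ 2) := by
  rw [hermiteIntegrand, norm_mul, norm_pow, norm_cexp_neg_sq]

lemma integrable_hermiteIntegrand (x : ℝ) (n : ℕ) : Integrable (hermiteIntegrand x n) := by
  refine ((integrable_exp_neg_mul_sq (b := 1 / 2) (by norm_num)).const_mul
    (n ! * 2 ^ n * rexp ((1 + x ^ 2) / 2))).mono' (by unfold hermiteIntegrand; fun_prop) ?_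
  refine .of_forall fun u => ?_
  have hz : ‖(x : ℂ) + u * I‖ ≤ 1 + x ^ 2 + u ^ 2 := by
    have h2 : ‖(x : ℂ) + u * I‖ ^ 2 = x ^ 2 + u ^ 2 := by
      rw [norm_add_mul_I, Real.sq_sqrt (by positivity)]
    nlinarith [sq_nonneg (‖(x : ℂ) + u * I‖ - 1)]
  rw [norm_hermiteIntegrand]
  exact (mul_le_mul_of_nonneg_right (pow_le_pow_left₀ (norm_nonneg _) hz n) (exp_pos _).le).trans
    (pow_mul_exp_neg_sq_le (by positivity) u n)

/-- Since `-2u = 2i((x + iu) - x)`, the derivative is again a combination of integrands. -/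
lemma hasDerivAt_hermiteIntegrand (x : ℝ) (k : ℕ) (u : ℝ) :
    HasDerivAt (hermiteIntegrand x k)
      (I * (k * hermiteIntegrand x (k - 1) u + 2 * hermiteIntegrand x (k + 1) u
        - 2 * x * hermiteIntegrand x k u)) u := by
  have hz : HasDerivAt (fun w : ℂ => (x : ℂ) + w * I) I u := by
    simpa using ((hasDerivAt_id (u : ℂ)).mul_const I).const_add (x : ℂ)
  have hg : HasDerivAt (fun w : ℂ => cexp (-w ^ 2)) (cexp (-(u : ℂ) ^ 2) * (-(2 * u))) u := by
    simpa using ((hasDerivAt_pow 2 (u : ℂ)).neg).cexp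
  convert ((hz.pow k).mul hg).comp_ofReal using 1
  · rfl
  · simp only [hermiteIntegrand, Pi.pow_apply]
    linear_combination (2 * ((x : ℂ) + u * I) ^ k * cexp (-(u : ℂ) ^ 2) * u) * I_sq

lemma hermiteIntegral_recurrence (x : ℝ) (k : ℕ) :
    2 * hermiteIntegral (k + 1) x =
      2 * x * hermiteIntegral k x - k * hermiteIntegral (k - 1) x := by
  have hi := integrable_hermiteIntegrand x
  have h := integral_eq_zero_of_hasDerivAt_of_integrable (hasDerivAt_hermiteIntegrand x k)
    ((((hi _).const_mul _).add ((hi _).const_mul _)).sub ((hi _).const_mul _) |>.const_mul I)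
    (hi k)
  rw [integral_const_mul, integral_sub, integral_add, integral_const_mul, integral_const_mul,
    integral_const_mul] at h
  · simp only [mul_eq_zero, I_ne_zero, false_or] at h
    unfold hermiteIntegral
    linear_combination h
  all_goals first
    | exact (hi _).const_mul _
    | exact ((hi _).const_mul _).add ((hi _).const_mul _)

lemma hermiteIntegral_zero (x : ℝ) : hermiteIntegral 0 x = (√π : ℝ) := by
  have h : ∀ u : ℝ, hermiteIntegrand x 0 u = (rexp (-1 * u ^ 2) : ℝ) := fun u => by
    simp [hermiteIntegrand]
  simp only [hermiteIntegral, h, integral_complex_ofReal, integral_gaussian, div_one]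

lemma hermiteIntegral_eq (n : ℕ) (x : ℝ) :
    hermiteIntegral n x = ((√π / 2 ^ n * physHermite n x : ℝ) : ℂ) := by
  induction n using Nat.twoStepInduction with
  | zero => simp [hermiteIntegral_zero, physHermite]
  | one =>
    have h := hermiteIntegral_recurrence x 0
    simp only [hermiteIntegral_zero, physHermite] at h ⊢
    push_cast
    linear_combination h / 2
  | more k ih₀ ih₁ =>
    have h := hermiteIntegral_recurrence x (k + 1)
    simp only [ih₀, ih₁, physHermite, Nat.add_sub_cancel] at h ⊢
    push_cast at h ⊢
    linear_combination h / 2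

end HermiteIntegral

section Mehler

open Complex

lemma integral_cexp_neg_mul_sq_add {b : ℝ} (hb : 0 < b) (c d : ℂ) :
    ∫ u : ℝ, cexp (-b * u ^ 2 + c * u + d) = √(π / b) * cexp (d + c ^ 2 / (4 * b)) := by
  rw [integral_cexp_quadratic (by simpa using hb), neg_neg, ← ofReal_div,
    show (1 / 2 : ℂ) = ((1 / 2 : ℝ) : ℂ) by norm_num, ← ofReal_cpow (by positivity),
    ← Real.sqrt_eq_rpow]
  congr 2
  ring

variable (t y : ℝ)

noncomputable def mehlerSummand (n : ℕ) (p : ℝ × ℝ) : ℂ :=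
  ((2 * t) ^ n / n ! : ℝ) * (hermiteIntegrand y n p.1 * hermiteIntegrand y n p.2)

noncomputable def mehlerKernel (p : ℝ × ℝ) : ℂ :=
  cexp (2 * t * (y + p.1 * I) * (y + p.2 * I) - p.1 ^ 2 - p.2 ^ 2)

noncomputable def mehlerBound (p : ℝ × ℝ) : ℝ :=
  rexp (2 * t * y ^ 2) * (rexp (-(1 - t) * p.1 ^ 2) * rexp (-(1 - t) * p.2 ^ 2))

lemma integrable_mehlerSummand (n : ℕ) : Integrable (mehlerSummand t y n) := by
  rw [Measure.volume_eq_prod]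
  exact ((integrable_hermiteIntegrand y n).mul_prod (integrable_hermiteIntegrand y n)).const_mul _

lemma integral_mehlerSummand (n : ℕ) :
    ∫ p, mehlerSummand t y n p = ((2 * t) ^ n / n ! : ℝ) * hermiteIntegral n y ^ 2 := by
  simp only [mehlerSummand]
  rw [integral_const_mul, Measure.volume_eq_prod, integral_prod_mul, sq]
  rfl

lemma hasSum_mehlerSummand (p : ℝ × ℝ) :
    HasSum (fun n => mehlerSummand t y n p) (mehlerKernel t y p) := by
  set w : ℂ := 2 * t * (y + p.1 * I) * (y + p.2 * I)
  set g : ℂ := cexp (-(p.1 : ℂ) ^ 2) * cexp (-(p.2 : ℂ) ^ 2)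
  have h := (NormedSpace.expSeries_div_hasSum_exp w).mul_right g
  rw [← exp_eq_exp_ℂ] at h
  have hterm : (fun n => mehlerSummand t y n p) = fun n => w ^ n / n ! * g := by
    ext n
    simp only [mehlerSummand, hermiteIntegrand, w, g, mul_pow]
    push_cast
    ring
  have hkernel : mehlerKernel t y p = cexp w * g := by
    simp only [mehlerKernel, w, g, ← Complex.exp_add]
    ring_nf
  rwa [hterm, hkernel]

lemma integrable_mehlerBound (ht₁ : t < 1) : Integrable (mehlerBound t y) := by
  have h := integrable_exp_neg_mul_sq (sub_pos.2 ht₁)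
  rw [Measure.volume_eq_prod]
  exact (h.mul_prod h).const_mul _

lemma sum_norm_mehlerSummand_le (ht₀ : 0 ≤ t) (N : ℕ) (p : ℝ × ℝ) :
    ∑ n ∈ Finset.range N, ‖mehlerSummand t y n p‖ ≤ mehlerBound t y p := by
  have ha : ‖(y : ℂ) + p.1 * I‖ ^ 2 = y ^ 2 + p.1 ^ 2 := by
    rw [norm_add_mul_I, Real.sq_sqrt (by positivity)]
  have hb : ‖(y : ℂ) + p.2 * I‖ ^ 2 = y ^ 2 + p.2 ^ 2 := by
    rw [norm_add_mul_I, Real.sq_sqrt (by positivity)]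
  set a := ‖(y : ℂ) + p.1 * I‖
  set b := ‖(y : ℂ) + p.2 * I‖
  have hnorm : ∀ n, ‖mehlerSummand t y n p‖ =
      (2 * t * (a * b)) ^ n / n ! * (rexp (-p.1 ^ 2) * rexp (-p.2 ^ 2)) := fun n => by
    rw [mehlerSummand, norm_mul, norm_mul, norm_hermiteIntegrand, norm_hermiteIntegrand,
      norm_real, norm_of_nonneg (by positivity)]
    ring
  have hab : 2 * t * (a * b) ≤ 2 * t * y ^ 2 + t * p.1 ^ 2 + t * p.2 ^ 2 := by
    nlinarith [mul_nonneg ht₀ (sq_nonneg (a - b))]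
  calc ∑ n ∈ Finset.range N, ‖mehlerSummand t y n p‖
      = (∑ n ∈ Finset.range N, (2 * t * (a * b)) ^ n / n !) *
          (rexp (-p.1 ^ 2) * rexp (-p.2 ^ 2)) := by simp only [hnorm, Finset.sum_mul]
    _ ≤ rexp (2 * t * y ^ 2 + t * p.1 ^ 2 + t * p.2 ^ 2) *
          (rexp (-p.1 ^ 2) * rexp (-p.2 ^ 2)) := by
      gcongr
      exact (sum_le_exp_of_nonneg (by positivity) N).trans (exp_le_exp.2 hab)
    _ = mehlerBound t y p := by
      simp only [mehlerBound, ← Real.exp_add]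
      ring_nf

lemma norm_mehlerKernel_le (ht₀ : 0 ≤ t) (p : ℝ × ℝ) :
    ‖mehlerKernel t y p‖ ≤ mehlerBound t y p :=
  le_of_tendsto' (hasSum_mehlerSummand t y p).tendsto_sum_nat.norm fun N =>
    (norm_sum_le _ _).trans (sum_norm_mehlerSummand_le t y ht₀ N p)

lemma integrable_mehlerKernel (ht₀ : 0 ≤ t) (ht₁ : t < 1) : Integrable (mehlerKernel t y) :=
  (integrable_mehlerBound t y ht₁).mono' (by unfold mehlerKernel; fun_prop)
    (.of_forall (norm_mehlerKernel_le t y ht₀))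

lemma summable_integral_norm_mehlerSummand (ht₀ : 0 ≤ t) (ht₁ : t < 1) :
    Summable fun n => ∫ p, ‖mehlerSummand t y n p‖ :=
  summable_of_sum_range_le (fun _ => integral_nonneg fun _ => norm_nonneg _) fun N => by
    rw [← integral_finsetSum _ fun n _ => (integrable_mehlerSummand t y n).norm]
    exact integral_mono (integrable_finsetSum _ fun n _ => (integrable_mehlerSummand t y n).norm)
      (integrable_mehlerBound t y ht₁) (sum_norm_mehlerSummand_le t y ht₀ N)

lemma integral_mehlerKernel (ht₀ : 0 ≤ t) (ht₁ : t < 1) :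
    ∫ p, mehlerKernel t y p =
      ((π / √(1 - t ^ 2) * rexp (2 * t * y ^ 2 / (1 + t)) : ℝ) : ℂ) := by
  have h₁ : 0 < 1 - t ^ 2 := by nlinarith
  have inner : ∀ u : ℝ, ∫ v : ℝ, mehlerKernel t y (u, v) = √π * cexp
      (-(1 - t ^ 2 : ℝ) * u ^ 2 + 2 * t * y * (1 - t) * I * u + (2 * t - t ^ 2) * y ^ 2) := by
    intro u
    calc ∫ v : ℝ, mehlerKernel t y (u, v)
        = ∫ v : ℝ, cexp (-(1 : ℝ) * v ^ 2 + 2 * t * (y + u * I) * I * v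
            + (2 * t * (y + u * I) * y - u ^ 2)) := by
          congr 1 with v
          simp only [mehlerKernel]
          push_cast
          ring_nf
      _ = _ := by
          rw [integral_cexp_neg_mul_sq_add one_pos, div_one]
          congr 2
          push_cast
          linear_combination ((t : ℂ) ^ 2 * y ^ 2 + 2 * (t : ℂ) ^ 2 * y * u * I
            + (t : ℂ) ^ 2 * u ^ 2 * (I ^ 2 - 1)) * I_sq
  have hint := integrable_mehlerKernel t y ht₀ ht₁
  rw [Measure.volume_eq_prod] at hint ⊢
  rw [integral_prod _ hint]
  simp only [inner]
  rw [integral_const_mul, integral_cexp_neg_mul_sq_add h₁]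
  have hexp : (2 * t - t ^ 2) * y ^ 2 + (2 * t * y * (1 - t) * I) ^ 2 / (4 * (1 - t ^ 2 : ℝ))
      = ((2 * t * y ^ 2 / (1 + t) : ℝ) : ℂ) := by
    have h₂ : (1 - t ^ 2 : ℂ) ≠ 0 := by exact_mod_cast h₁.ne'
    have h₃ : (1 + t : ℂ) ≠ 0 := by exact_mod_cast (by linarith : 1 + t ≠ 0)
    rw [mul_pow, I_sq]
    push_cast
    field_simp
    ring
  have hsqrt : √π * √(π / (1 - t ^ 2)) = π / √(1 - t ^ 2) := by
    rw [Real.sqrt_div pi_pos.le, mul_div_assoc', Real.mul_self_sqrt pi_pos.le]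
  rw [hexp, ← ofReal_exp, ← mul_assoc, ← ofReal_mul, hsqrt, ← ofReal_mul]

theorem hasSum_mehler (ht₀ : 0 ≤ t) (ht₁ : t < 1) :
    HasSum (fun n : ℕ => (2 * t) ^ n / n ! * (√π / 2 ^ n * physHermite n y) ^ 2)
      (π / √(1 - t ^ 2) * rexp (2 * t * y ^ 2 / (1 + t))) := by
  have h := hasSum_integral_of_summable_integral_norm (integrable_mehlerSummand t y)
    (summable_integral_norm_mehlerSummand t y ht₀ ht₁)
  simp only [integral_mehlerSummand, hermiteIntegral_eq,
    fun p => (hasSum_mehlerSummand t y p).tsum_eq, integral_mehlerKernel t y ht₀ ht₁] at h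
  exact_mod_cast h

end Mehler

lemma hermiteFn_sq (n : ℕ) (x : ℝ) :
    hermiteFn n x ^ 2 = physHermite n x ^ 2 * rexp (-x ^ 2) / (2 ^ n * n ! * √π) := by
  have hA : 0 < (2 : ℝ) ^ n * n ! * √π := by positivity
  have hpow : ((2 ^ n * n ! * √π : ℝ) ^ (-(1 : ℝ) / 2)) ^ 2 = (2 ^ n * n ! * √π)⁻¹ := by
    rw [← Real.rpow_natCast, ← Real.rpow_mul hA.le]
    norm_num [Real.rpow_neg_one]
  have hexp : rexp (-x ^ 2 / 2) ^ 2 = rexp (-x ^ 2) := by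
    rw [← Real.exp_nat_mul]
    ring_nf
  rw [hermiteFn, mul_pow, mul_pow, hpow, hexp]
  field_simp

theorem hasSum_pow_mul_hermiteFn_sq {t : ℝ} (ht₀ : 0 ≤ t) (ht₁ : t < 1) (y : ℝ) :
    HasSum (fun n : ℕ => t ^ n * hermiteFn n y ^ 2)
      (rexp (-((1 - t) / (1 + t)) * y ^ 2) / √(π * (1 - t ^ 2))) := by
  have hterm : ∀ n : ℕ, (2 * t) ^ n / n ! * (√π / 2 ^ n * physHermite n y) ^ 2 *
      (rexp (-y ^ 2) / (π * √π)) = t ^ n * hermiteFn n y ^ 2 := fun n => by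
    rw [hermiteFn_sq]
    field_simp
    rw [Real.sq_sqrt pi_pos.le]
    ring
  have hval : π / √(1 - t ^ 2) * rexp (2 * t * y ^ 2 / (1 + t)) *
      (rexp (-y ^ 2) / (π * √π)) = rexp (-((1 - t) / (1 + t)) * y ^ 2) / √(π * (1 - t ^ 2)) := by
    have h₁ : 0 < 1 - t ^ 2 := by nlinarith
    have h₂ : 1 + t ≠ 0 := by linarith
    have he : rexp (2 * t * y ^ 2 / (1 + t)) * rexp (-y ^ 2) =
        rexp (-((1 - t) / (1 + t)) * y ^ 2) := by
      rw [← Real.exp_add]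
      congr 1
      field_simp
      ring
    rw [Real.sqrt_mul pi_pos.le, ← he]
    field_simp
  have h := (hasSum_mehler t y ht₀ ht₁).mul_right (rexp (-y ^ 2) / (π * √π))
  rwa [funext hterm, hval] at h

lemma tanh_eq_one_sub_exp_div (s : ℝ) :
    tanh s = (1 - rexp (-2 * s)) / (1 + rexp (-2 * s)) := by
  have h : rexp (-2 * s) = rexp (-s) / rexp s := by
    rw [← Real.exp_sub]; ring_nf
  rw [tanh_eq, h]
  field_simp

lemma one_sub_exp_neg_two_mul_sq (s : ℝ) :
    1 - rexp (-2 * s) ^ 2 = 2 * sinh (2 * s) * rexp (-s) ^ 2 := by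
  have h : rexp (2 * s) * rexp (-(2 * s)) = 1 := by rw [← Real.exp_add]; simp
  have h₁ : rexp (-2 * s) ^ 2 = rexp (-(2 * s)) * rexp (-(2 * s)) := by
    rw [sq, neg_mul]
  have h₂ : rexp (-s) ^ 2 = rexp (-(2 * s)) := by
    rw [sq, ← Real.exp_add]; ring_nf
  rw [Real.sinh_eq, h₁, h₂]
  linear_combination -h

theorem hasSum_exp_mul_hermiteFn_sq {s : ℝ} (hs : 0 < s) (y : ℝ) :
    HasSum (fun n : ℕ => rexp (-2 * s * n) * hermiteFn n y ^ 2)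
      (rexp s / √(2 * π * sinh (2 * s)) * rexp (-tanh s * y ^ 2)) := by
  have h := hasSum_pow_mul_hermiteFn_sq (exp_pos (-2 * s)).le
    (Real.exp_lt_one_iff.2 (by linarith)) y
  have hpow : ∀ n : ℕ, rexp (-2 * s) ^ n = rexp (-2 * s * n) := fun n => by
    rw [← Real.exp_nat_mul]; ring_nf
  have hval : √(π * (1 - rexp (-2 * s) ^ 2)) = √(2 * π * sinh (2 * s)) / rexp s := by
    rw [one_sub_exp_neg_two_mul_sq, ← mul_assoc, mul_left_comm, Real.sqrt_mul' _ (sq_nonneg _),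
      Real.sqrt_sq (exp_pos _).le, Real.exp_neg]
    ring_nf
  have hval' : rexp (-tanh s * y ^ 2) / (√(2 * π * sinh (2 * s)) / rexp s) =
      rexp s / √(2 * π * sinh (2 * s)) * rexp (-tanh s * y ^ 2) := by
    rw [div_div_eq_mul_div, div_mul_eq_mul_div, mul_comm]
  rwa [← tanh_eq_one_sub_exp_div, hval, hval', funext fun n => congrArg (· * _) (hpow n)] at h

lemma integral_Ioi_exp_neg_mul_sq_le {a c : ℝ} (ha : 0 < a) (hc : 0 < c) :
    ∫ y in Ioi c, rexp (-a * y ^ 2) ≤ rexp (-a * c ^ 2) / (2 * a * c) := by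
  have hderiv : ∀ y ∈ Ici c, HasDerivAt (fun z => -rexp (-a * z ^ 2) / (2 * a))
      (y * rexp (-a * y ^ 2)) y := fun y _ => by
    refine (((hasDerivAt_pow 2 y).const_mul (-a)).exp.neg.div_const (2 * a)).congr_deriv ?_
    field_simp
    ring
  have hlim : Tendsto (fun z => -rexp (-a * z ^ 2) / (2 * a)) atTop (𝓝 0) := by
    simpa using ((tendsto_exp_atBot.comp ((tendsto_pow_atTop two_ne_zero).const_mul_atTop_of_neg
      (neg_neg_of_pos ha))).neg.div_const (2 * a))
  have hmoment : ∫ y in Ioi c, y * rexp (-a * y ^ 2) = rexp (-a * c ^ 2) / (2 * a) := by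
    rw [integral_Ioi_of_hasDerivAt_of_tendsto' hderiv
      (integrable_mul_exp_neg_mul_sq ha).integrableOn hlim]
    ring
  calc ∫ y in Ioi c, rexp (-a * y ^ 2)
      ≤ ∫ y in Ioi c, c⁻¹ * (y * rexp (-a * y ^ 2)) := by
        refine setIntegral_mono_on (integrable_exp_neg_mul_sq ha).integrableOn
          ((integrable_mul_exp_neg_mul_sq ha).const_mul _).integrableOn measurableSet_Ioi
          fun y hy => ?_
        rw [← mul_assoc, ← div_eq_inv_mul]
        exact le_mul_of_one_le_left (exp_pos _).le ((one_le_div hc).2 (le_of_lt hy))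
    _ = rexp (-a * c ^ 2) / (2 * a * c) := by
        rw [integral_const_mul, hmoment]
        field_simp

theorem stmt15 (s c : ℝ) (hs : 0 < s) (hc : 0 < c) :
    (∫ y in Set.Ioi c, ∑' n : ℕ, Real.exp (-2 * s * n) * hermiteFn n y ^ 2) ≤
      Real.exp s * Real.exp (-(c ^ 2) * Real.tanh s) /
        (2 * Real.sqrt (2 * Real.pi * Real.sinh (2 * s)) * Real.tanh s * c) := by
  have htanh : 0 < tanh s := by
    rw [tanh_eq_one_sub_exp_div]
    exact div_pos (sub_pos.2 (Real.exp_lt_one_iff.2 (by linarith))) (by positivity)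
  simp only [fun y => (hasSum_exp_mul_hermiteFn_sq hs y).tsum_eq, integral_const_mul]
  calc rexp s / √(2 * π * sinh (2 * s)) * ∫ y in Ioi c, rexp (-tanh s * y ^ 2)
      ≤ rexp s / √(2 * π * sinh (2 * s)) * (rexp (-tanh s * c ^ 2) / (2 * tanh s * c)) := by
        gcongr
        exact integral_Ioi_exp_neg_mul_sq_le htanh hc
    _ = _ := by
        rw [neg_mul, neg_mul, mul_comm (tanh s)]
        field_simp
end
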